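/- The product G₁₀·G₃·G₆ of the matrices corresponding to the strong arbitrage chain Â_{AMR}, Â_{FRA}, Â_{FMR} equals the zero 3×3 matrix; hence this chain of three strong arbitrages is a stabilizer, bringing any ensemble of positive exchange rates to a balanced ensemble. -/
import Mathlib


noncomputable def strongArb : Fin 12 → (Fin 6 → ℝ) → (Fin 6 → ℝ) :=
  ![fun R => Function.update R 0 (R 1 / R 3),   -- FAR
    fun R => Function.update R 0 (R 2 / R 4),   -- FAM
    fun R => Function.update R 1 (R 0 * R 3),   -- FRA
    fun R => Function.update R 1 (R 2 / R 5),   -- FRM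
    fun R => Function.update R 2 (R 0 * R 4),   -- FMA
    fun R => Function.update R 2 (R 1 * R 5),   -- FMR
    fun R => Function.update R 3 (R 1 / R 0),   -- ARF
    fun R => Function.update R 3 (R 4 / R 5),   -- ARM
    fun R => Function.update R 4 (R 2 / R 0),   -- AMF
    fun R => Function.update R 4 (R 3 * R 5),   -- AMR
    fun R => Function.update R 5 (R 2 / R 1),   -- RMF
    fun R => Function.update R 5 (R 4 / R 3)]   -- RMA

def G : Fin 12 → Matrix (Fin 3) (Fin 3) ℝ :=
  ![!![0,0,-1; 0,1,0; 0,0,1],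
    !![1,0,0; 1,1,1; -1,0,0],
    !![0,0,0; 0,1,0; 0,0,1],
    !![0,0,0; 0,1,0; 1,0,1],
    !![1,0,0; 0,1,1; 0,0,0],
    !![1,0,1; 0,1,0; 0,0,0],
    !![0,-1,-1; 0,1,0; 0,0,1],
    !![1,0,0; -1,0,-1; 0,0,1],
    !![1,0,0; 0,0,0; 0,1,1],
    !![1,0,0; 0,0,0; 0,0,1],
    !![1,1,1; 0,1,0; 0,-1,0],
    !![1,0,0; 0,0,-1; 0,0,1]]

def IsBalanced (R : Fin 6 → ℝ) : Prop :=
  R 0 * R 3 = R 1 ∧ R 3 * R 5 = R 4 ∧ R 0 * R 3 * R 5 = R 2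

/-- The chain `Â_{AMR}, Â_{FRA}, Â_{FMR}` (numbers 10, 3, 6) is a stabilizer:
`G₁₀ · G₃ · G₆ = 0` and the chain balances every ensemble of positive rates. -/
theorem AMR_FRA_FMR_is_stabilizer :
    G 9 * G 2 * G 5 = 0 ∧
    ∀ R : Fin 6 → ℝ, (∀ i, 0 < R i) →
      IsBalanced (strongArb 5 (strongArb 2 (strongArb 9 R))) := by
  constructor
  · have h9 : G 9 = !![(1:ℝ),0,0; 0,0,0; 0,0,1] := rfl
    have h2 : G 2 = !![(0:ℝ),0,0; 0,1,0; 0,0,1] := rfl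
    have h5 : G 5 = !![(1:ℝ),0,1; 0,1,0; 0,0,0] := rfl
    rw [h9, h2, h5]
    norm_num [Matrix.mul_fin_three, ← Matrix.ext_iff, Fin.forall_fin_succ]
  · intro R hR
    have e1 : strongArb 9 R = Function.update R 4 (R 3 * R 5) := rfl
    have e2 : strongArb 2 (strongArb 9 R) =
        Function.update (Function.update R 4 (R 3 * R 5)) 1 (R 0 * R 3) := by
      have d2 : ∀ f : Fin 6 → ℝ, strongArb 2 f = Function.update f 1 (f 0 * f 3) :=
        fun f => rfl
      rw [e1, d2, Function.update_of_ne (show (0:Fin 6) ≠ 4 by decide),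
        Function.update_of_ne (show (3:Fin 6) ≠ 4 by decide)]
    have e3 : strongArb 5 (strongArb 2 (strongArb 9 R)) =
        Function.update (Function.update (Function.update R 4 (R 3 * R 5)) 1 (R 0 * R 3)) 2
          (R 0 * R 3 * R 5) := by
      have d5 : ∀ f : Fin 6 → ℝ, strongArb 5 f = Function.update f 2 (f 1 * f 5) :=
        fun f => rfl
      rw [e2, d5, Function.update_self, Function.update_of_ne (show (5:Fin 6) ≠ 1 by decide),
        Function.update_of_ne (show (5:Fin 6) ≠ 4 by decide)]
    rw [e3]
    refine ⟨?_, ?_, ?_⟩ <;>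
      simp only [Function.update_self, Function.update_of_ne (show (0:Fin 6) ≠ 2 by decide),
        Function.update_of_ne (show (0:Fin 6) ≠ 1 by decide),
        Function.update_of_ne (show (0:Fin 6) ≠ 4 by decide),
        Function.update_of_ne (show (3:Fin 6) ≠ 2 by decide),
        Function.update_of_ne (show (3:Fin 6) ≠ 1 by decide),
        Function.update_of_ne (show (3:Fin 6) ≠ 4 by decide),
        Function.update_of_ne (show (5:Fin 6) ≠ 2 by decide),
        Function.update_of_ne (show (5:Fin 6) ≠ 1 by decide),
        Function.update_of_ne (show (5:Fin 6) ≠ 4 by decide),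
        Function.update_of_ne (show (1:Fin 6) ≠ 2 by decide),
        Function.update_of_ne (show (1:Fin 6) ≠ 4 by decide),
        Function.update_of_ne (show (4:Fin 6) ≠ 2 by decide),
        Function.update_of_ne (show (4:Fin 6) ≠ 1 by decide)]
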